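/- arXiv:math/0603256 — 3 statements merged into one kernel-verified Lean document; each statement's English description precedes it below -/
import Mathlib

section
/- For all natural numbers s, d, k one has Σ_{ℓ=0}^{k} C(s, k−ℓ)·d^{k−ℓ} ≤ C(s·d + k, k), where C(n, m) denotes the binomial coefficient. -/
lemma descFactorial_mul_pow_le (s d : ℕ) : ∀ ℓ : ℕ,
    s.descFactorial ℓ * d ^ ℓ ≤ (s * d).descFactorial ℓ := by
  intro ℓ
  induction ℓ with
  | zero => simp
  | succ n ih =>
      rw [Nat.descFactorial_succ, Nat.descFactorial_succ, pow_succ]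
      calc (s - n) * s.descFactorial n * (d ^ n * d)
          = ((s - n) * d) * (s.descFactorial n * d ^ n) := by ring
        _ ≤ (s * d - n) * (s * d).descFactorial n := by
            apply Nat.mul_le_mul _ ih
            rcases Nat.eq_zero_or_pos d with hd | hd
            · simp [hd]
            · calc (s - n) * d = s * d - n * d := by rw [Nat.sub_mul]
                _ ≤ s * d - n := Nat.sub_le_sub_left (Nat.le_mul_of_pos_right n hd) _

lemma choose_mul_pow_le (s d ℓ : ℕ) : s.choose ℓ * d ^ ℓ ≤ (s * d).choose ℓ := by
  have h := descFactorial_mul_pow_le s d ℓ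
  rw [Nat.descFactorial_eq_factorial_mul_choose, Nat.descFactorial_eq_factorial_mul_choose,
    Nat.mul_assoc] at h
  exact Nat.le_of_mul_le_mul_left h ℓ.factorial_pos

lemma sum_choose_pow_le (s d : ℕ) : ∀ k : ℕ,
    ∑ ℓ ∈ Finset.range (k + 1), s.choose ℓ * d ^ ℓ ≤ (s * d + k).choose k := by
  intro k
  induction k with
  | zero => simp
  | succ n ih =>
      rw [Finset.sum_range_succ]
      have h1 : s.choose (n + 1) * d ^ (n + 1) ≤ (s * d + n).choose (n + 1) :=
        le_trans (choose_mul_pow_le s d (n + 1)) (Nat.choose_le_choose _ (Nat.le_add_right _ n))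
      calc (∑ ℓ ∈ Finset.range (n + 1), s.choose ℓ * d ^ ℓ) + s.choose (n + 1) * d ^ (n + 1)
          ≤ (s * d + n).choose n + (s * d + n).choose (n + 1) := Nat.add_le_add ih h1
        _ = (s * d + (n + 1)).choose (n + 1) := by
            rw [show s * d + (n + 1) = (s * d + n) + 1 from rfl, Nat.choose_succ_succ]

/-- For all natural numbers `s`, `d`, `k`:
`Σ_{ℓ=0}^{k} C(s,k−ℓ)·d^(k−ℓ) ≤ C(s·d + k, k)`. -/
theorem stmt4 (s d k : ℕ) :
    ∑ ℓ ∈ Finset.range (k + 1), s.choose (k - ℓ) * d ^ (k - ℓ)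
      ≤ (s * d + k).choose k := by
  have hrefl : ∑ ℓ ∈ Finset.range (k + 1), s.choose (k - ℓ) * d ^ (k - ℓ)
      = ∑ ℓ ∈ Finset.range (k + 1), s.choose ℓ * d ^ ℓ := by
    have := Finset.sum_range_reflect (fun ℓ => s.choose ℓ * d ^ ℓ) (k + 1)
    simpa using this
  rw [hrefl]
  exact sum_choose_pow_le s d k
end

section
/- Let k ≥ 1 and s ≥ 1 be integers and let P₁,…,P_s ∈ ℝ[X₁,…,X_k] have total degree at most 1. Then every realization R(σ) of a sign condition has finitely many connected components, and the sum over all realizable sign conditions σ of the number of connected components of R(σ) is at most Σ_{i=0}^{k} Σ_{j=0}^{k−i} C(s, i)·C(s−i, j), where C(n, m) denotes the binomial coefficient. -/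
/-!
Each realization of a sign condition of affine functions is an intersection of open half-spaces
and hyperplanes, hence convex and connected, so the sum counts the realizable sign conditions.
When an affine function `φ` is added to a family, a realizable sign condition `τ` of the old
family extends with the sign `0` of `φ` only if `τ` is realized on the hyperplane `φ = 0`, and
by convexity it extends with both signs `±1` only in that case too. Hence the number `N(s, k)` of
realizable sign conditions of `s` functions on a `k`-dimensional space satisfies
`N(s + 1, k) ≤ N(s, k) + 2 N(s, k - 1)`, which is solved by `∑_{m ≤ k} C(s, m) 2^m`. The double
sum of the statement counts the same pairs of disjoint sets `I, J ⊆ {1, …, s}` with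
`|I| + |J| ≤ k`, grouped by `I` instead of `I ∪ J`.
-/

/-- The realization of the sign condition `σ` for the family of polynomials `P`. -/
def SignRealization {k s : ℕ} (P : Fin s → MvPolynomial (Fin k) ℝ)
    (σ : Fin s → SignType) : Set (Fin k → ℝ) :=
  {x | ∀ i, SignType.sign (MvPolynomial.eval x (P i)) = σ i}

section SignConditionBound

open Finset

def signConditionBound (s k : ℕ) : ℕ := ∑ m ∈ range (k + 1), s.choose m * 2 ^ m

theorem signConditionBound_zero_left (k : ℕ) : signConditionBound 0 k = 1 := by
  simp [signConditionBound, sum_range_succ']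

theorem signConditionBound_mono_left (s k : ℕ) :
    signConditionBound s k ≤ signConditionBound (s + 1) k :=
  sum_le_sum fun m _ => Nat.mul_le_mul_right _ (Nat.choose_le_succ s m)

theorem signConditionBound_succ_succ (s k : ℕ) :
    signConditionBound (s + 1) (k + 1) =
      signConditionBound s (k + 1) + 2 * signConditionBound s k := by
  simp only [signConditionBound, sum_range_succ' _ (k + 1), Nat.choose_succ_succ,
    Nat.choose_zero_right, pow_succ', mul_left_comm _ 2, ← mul_sum, add_mul, sum_add_distrib,
    Nat.succ_eq_add_one]
  omega

theorem signConditionBound_eq_sum_choose_mul_choose (s k : ℕ) :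
    signConditionBound s k =
      ∑ i ∈ range (k + 1), ∑ j ∈ range (k - i + 1), s.choose i * (s - i).choose j := by
  symm
  calc ∑ i ∈ range (k + 1), ∑ j ∈ range (k - i + 1), s.choose i * (s - i).choose j
      = ∑ m ∈ range (k + 1), ∑ i ∈ range (m + 1), s.choose i * (s - i).choose (m - i) := by
        rw [sum_range_diag_flip (k + 1) fun i j => s.choose i * (s - i).choose j]
        refine sum_congr rfl fun i hi => ?_
        rw [mem_range] at hi
        rw [show k + 1 - i = k - i + 1 by omega]
    _ = ∑ m ∈ range (k + 1), ∑ i ∈ range (m + 1), s.choose m * m.choose i := by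
        refine sum_congr rfl fun m _ => sum_congr rfl fun i hi => ?_
        rw [Nat.choose_mul (Nat.lt_succ_iff.mp (mem_range.mp hi))]
    _ = signConditionBound s k := by
        simp only [← mul_sum, Nat.sum_range_choose, signConditionBound]

end SignConditionBound

namespace MvPolynomial

variable {σ R : Type*}

theorem exists_linearMap_eval_eq_of_isHomogeneous_one [CommSemiring R]
    {q : MvPolynomial σ R} (hq : q.IsHomogeneous 1) :
    ∃ g : (σ → R) →ₗ[R] R, ∀ x, g x = eval x q := by
  have hmem : q ∈ Submodule.span R (Set.range X) := by
    rw [← homogeneousSubmodule_one_eq_span_X]; exact hq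
  clear hq
  induction hmem using Submodule.span_induction with
  | mem _ h =>
    obtain ⟨i, rfl⟩ := h
    exact ⟨LinearMap.proj i, fun x => by simp⟩
  | zero => exact ⟨0, fun x => by simp⟩
  | add p q _ _ hp hq =>
    obtain ⟨g, hg⟩ := hp
    obtain ⟨h, hh⟩ := hq
    exact ⟨g + h, fun x => by simp [hg, hh]⟩
  | smul c p _ hp =>
    obtain ⟨g, hg⟩ := hp
    exact ⟨c • g, fun x => by simp [hg]⟩

theorem exists_affineMap_eval_eq [CommRing R] (p : MvPolynomial σ R)
    (hp : p.totalDegree ≤ 1) : ∃ g : (σ → R) →ᵃ[R] R, ∀ x, g x = eval x p := by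
  have hsplit : p = C (coeff 0 p) + homogeneousComponent 1 p := by
    conv_lhs => rw [← sum_homogeneousComponent p]
    rw [Finset.sum_subset (Finset.range_subset_range.2 (by omega : p.totalDegree + 1 ≤ 2))
      fun i hi hi' => homogeneousComponent_eq_zero _ _ (by simp at hi hi'; omega)]
    simp [Finset.sum_range_succ]
  obtain ⟨g, hg⟩ :=
    exists_linearMap_eval_eq_of_isHomogeneous_one (homogeneousComponent_isHomogeneous 1 p)
  refine ⟨g.toAffineMap + AffineMap.const R _ (coeff 0 p), fun x => ?_⟩
  conv_rhs => rw [hsplit]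
  simp [hg, add_comm]

end MvPolynomial

section SignVector

open Set

variable {V : Type*} [AddCommGroup V] [Module ℝ V]

noncomputable def signVector {ι : Type*} (f : ι → V →ᵃ[ℝ] ℝ) (x : V) : ι → SignType :=
  fun i => SignType.sign (f i x)

theorem convex_signVector_preimage {ι : Type*} (f : ι → V →ᵃ[ℝ] ℝ) (σ : ι → SignType) :
    Convex ℝ (signVector f ⁻¹' {σ}) := by
  have h : signVector f ⁻¹' {σ} = ⋂ i, f i ⁻¹' (SignType.sign ⁻¹' {σ i}) := by
    ext x; simp [signVector, funext_iff]
  rw [h]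
  exact convex_iInter fun i =>
    ((ordConnected_singleton.preimage_mono SignType.sign.monotone).convex).affine_preimage (f i)

theorem signVector_cons {s : ℕ} (φ : V →ᵃ[ℝ] ℝ) (f : Fin s → V →ᵃ[ℝ] ℝ) (x : V) :
    signVector (Fin.cons φ f) x = Fin.cons (SignType.sign (φ x)) (signVector f x) := by
  ext i; cases i using Fin.cases <;> rfl

theorem Convex.exists_eq_zero_of_nonneg_of_nonpos {S : Set V} (hS : Convex ℝ S)
    (φ : V →ᵃ[ℝ] ℝ) {x y : V} (hx : x ∈ S) (hy : y ∈ S) (hφx : 0 ≤ φ x) (hφy : φ y ≤ 0) :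
    ∃ z ∈ S, φ z = 0 := by
  have h0 : (0 : ℝ) ∈ φ '' segment ℝ y x := by
    rw [image_segment, segment_eq_Icc (hφy.trans hφx)]
    exact ⟨hφy, hφx⟩
  obtain ⟨z, hz, hφz⟩ := h0
  exact ⟨z, hS.segment_subset hy hx hz, hφz⟩

theorem ncard_range_signVector_cons_le {s : ℕ} (φ : V →ᵃ[ℝ] ℝ) (f : Fin s → V →ᵃ[ℝ] ℝ) :
    (range (signVector (Fin.cons φ f))).ncard ≤
      (range (signVector f)).ncard + 2 * (signVector f '' {x | φ x = 0}).ncard := by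
  set A : SignType → Set (Fin s → SignType) :=
    fun c => signVector f '' {x | SignType.sign (φ x) = c} with hA
  have hcover : range (signVector (Fin.cons φ f)) ⊆
      Fin.cons 0 '' A 0 ∪ (Fin.cons 1 '' A 1 ∪ Fin.cons (-1) '' A (-1)) := by
    rintro _ ⟨x, rfl⟩
    rw [signVector_cons]
    rcases hc : SignType.sign (φ x) with _ | _ | _
    · exact Or.inl ⟨_, ⟨x, hc, rfl⟩, rfl⟩
    · exact Or.inr (Or.inr ⟨_, ⟨x, hc, rfl⟩, rfl⟩)
    · exact Or.inr (Or.inl ⟨_, ⟨x, hc, rfl⟩, rfl⟩)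
  have hinter : A 1 ∩ A (-1) ⊆ A 0 := by
    rintro τ ⟨⟨x, hx, rfl⟩, ⟨y, hy, hxy⟩⟩
    obtain ⟨z, hz, hφz⟩ :=
      (convex_signVector_preimage f (signVector f x)).exists_eq_zero_of_nonneg_of_nonpos φ
        (mem_preimage.2 rfl) hxy (sign_eq_one_iff.1 hx).le (sign_eq_neg_one_iff.1 hy).le
    exact ⟨z, by simpa using hφz, hz⟩
  have hunion : A 1 ∪ A (-1) ⊆ range (signVector f) := by
    rintro _ (⟨x, -, rfl⟩ | ⟨x, -, rfl⟩) <;> exact mem_range_self x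
  have hzero : A 0 = signVector f '' {x | φ x = 0} := by simp [hA, sign_eq_zero_iff]
  calc (range (signVector (Fin.cons φ f))).ncard
      ≤ (A 0).ncard + ((A 1).ncard + (A (-1)).ncard) := by
        refine (ncard_le_ncard hcover).trans ((ncard_union_le _ _).trans ?_)
        exact add_le_add ncard_image_le
          ((ncard_union_le _ _).trans (add_le_add ncard_image_le ncard_image_le))
    _ = (A 0).ncard + ((A 1 ∪ A (-1)).ncard + (A 1 ∩ A (-1)).ncard) := by
        rw [ncard_union_add_ncard_inter]
    _ ≤ (A 0).ncard + ((range (signVector f)).ncard + (A 0).ncard) :=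
        add_le_add le_rfl (add_le_add (ncard_le_ncard hunion) (ncard_le_ncard hinter))
    _ = _ := by rw [← hzero]; ring

theorem ncard_range_signVector_cons_le_of_linear_eq_zero {s : ℕ} {φ : V →ᵃ[ℝ] ℝ}
    (hφ : φ.linear = 0) (f : Fin s → V →ᵃ[ℝ] ℝ) :
    (range (signVector (Fin.cons φ f))).ncard ≤ (range (signVector f)).ncard := by
  obtain ⟨q, rfl⟩ := (AffineMap.linear_eq_zero_iff_exists_const φ).1 hφ
  have h : range (signVector (Fin.cons (AffineMap.const ℝ V q) f)) =
      Fin.cons (SignType.sign q) '' range (signVector f) := by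
    simp only [← range_comp]
    exact congrArg range (funext fun x => signVector_cons _ f x)
  rw [h]
  exact ncard_image_le

theorem AffineMap.exists_range_eq_setOf_eq_zero [FiniteDimensional ℝ V] (φ : V →ᵃ[ℝ] ℝ)
    (hφ : φ.linear ≠ 0) :
    ∃ (W : Submodule ℝ V) (e : W →ᵃ[ℝ] V),
      range e = {x | φ x = 0} ∧ Module.finrank ℝ W + 1 = Module.finrank ℝ V := by
  obtain ⟨x₀, hx₀⟩ := (φ.linear_surjective_iff.1 (LinearMap.surjective hφ)) 0
  set W := LinearMap.ker φ.linear
  refine ⟨W, (AffineEquiv.constVAdd ℝ V x₀).toAffineMap.comp W.subtype.toAffineMap, ?_,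
    Module.Dual.finrank_ker_add_one_of_ne_zero hφ⟩
  ext x
  constructor
  · rintro ⟨w, rfl⟩
    change φ (x₀ + w) = 0
    rw [add_comm, ← vadd_eq_add, φ.map_vadd, hx₀, LinearMap.mem_ker.1 w.2, vadd_eq_add, add_zero]
  · intro hx
    refine ⟨⟨x - x₀, ?_⟩, ?_⟩
    · simp [W, ← vsub_eq_sub, AffineMap.linearMap_vsub, hx₀, hx.out]
    · simp

theorem ncard_range_signVector_le {s : ℕ} [FiniteDimensional ℝ V] (f : Fin s → V →ᵃ[ℝ] ℝ) :
    (range (signVector f)).ncard ≤ signConditionBound s (Module.finrank ℝ V) := by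
  induction s generalizing V with
  | zero =>
    rw [signConditionBound_zero_left]
    exact (ncard_le_ncard (subset_univ _)).trans (by simp)
  | succ s ih =>
    obtain ⟨φ, f, rfl⟩ : ∃ φ f', f = Fin.cons φ f' := ⟨_, _, (Fin.cons_self_tail f).symm⟩
    by_cases hφ : φ.linear = 0
    · exact (ncard_range_signVector_cons_le_of_linear_eq_zero hφ f).trans
        ((ih f).trans (signConditionBound_mono_left _ _))
    obtain ⟨W, e, he, hW⟩ := φ.exists_range_eq_setOf_eq_zero hφ
    have hzero : signVector f '' {x | φ x = 0} = range (signVector fun i => (f i).comp e) := by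
      rw [← he, ← range_comp]; rfl
    calc (range (signVector (Fin.cons φ f))).ncard
        ≤ (range (signVector f)).ncard + 2 * (signVector f '' {x | φ x = 0}).ncard :=
          ncard_range_signVector_cons_le φ f
      _ ≤ signConditionBound s (Module.finrank ℝ W + 1) +
            2 * signConditionBound s (Module.finrank ℝ W) := by
          rw [hzero, hW]
          exact add_le_add (ih f) (Nat.mul_le_mul_left 2 (ih _))
      _ = signConditionBound (s + 1) (Module.finrank ℝ V) := by
          rw [← hW, signConditionBound_succ_succ]

end SignVector

open Classical in
theorem IsPreconnected.natCard_connectedComponents_le {X : Type*} [TopologicalSpace X]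
    {S : Set X} (hS : IsPreconnected S) :
    Nat.card (ConnectedComponents S) ≤ if S.Nonempty then 1 else 0 := by
  have := isPreconnected_iff_preconnectedSpace.1 hS
  split_ifs with h
  · exact Finite.card_le_one_iff_subsingleton.2 inferInstance
  · have : IsEmpty S := Set.isEmpty_coe_sort.2 (Set.not_nonempty_iff_eq_empty.1 h)
    have : IsEmpty (ConnectedComponents S) := ConnectedComponents.isEmpty_iff_isEmpty.2 this
    simp

theorem stmt5_general (k s : ℕ)
    (P : Fin s → MvPolynomial (Fin k) ℝ) (hP : ∀ i, (P i).totalDegree ≤ 1) :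
    (∀ σ : Fin s → SignType, Finite (ConnectedComponents ↥(SignRealization P σ))) ∧
    (∑ σ : Fin s → SignType, Nat.card (ConnectedComponents ↥(SignRealization P σ)))
      ≤ ∑ i ∈ Finset.range (k + 1), ∑ j ∈ Finset.range (k - i + 1),
          s.choose i * (s - i).choose j := by
  classical
  choose g hg using fun i => (P i).exists_affineMap_eval_eq (hP i)
  have hR : ∀ σ, SignRealization P σ = signVector g ⁻¹' {σ} := fun σ => by
    ext x; simp [SignRealization, signVector, hg, funext_iff]
  have hconn : ∀ σ, IsPreconnected (SignRealization P σ) := fun σ =>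
    hR σ ▸ (convex_signVector_preimage g σ).isPreconnected
  refine ⟨fun σ => ?_, ?_⟩
  · have := isPreconnected_iff_preconnectedSpace.1 (hconn σ)
    exact Finite.of_subsingleton
  calc ∑ σ, Nat.card (ConnectedComponents ↥(SignRealization P σ))
      ≤ ∑ σ, if σ ∈ Set.range (signVector g) then 1 else 0 := by
        refine Finset.sum_le_sum fun σ _ => (hconn σ).natCard_connectedComponents_le.trans ?_
        simp [hR, Set.Nonempty, eq_comm]
    _ = (Set.range (signVector g)).ncard := by
        simp [Finset.sum_boole, Set.ncard_eq_toFinset_card']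
    _ ≤ signConditionBound s k := by
        simpa using ncard_range_signVector_le g
    _ = _ := signConditionBound_eq_sum_choose_mul_choose s k

/-- For a family of `s` polynomials in `ℝ[X₁,…,X_k]` of total degree at most `1`,
every realization of a sign condition has finitely many connected components and the
total number of connected components of the realizations of all realizable sign
conditions is at most `Σ_{i=0}^{k} Σ_{j=0}^{k−i} C(s,i)·C(s−i,j)`. -/
theorem stmt5 (k s : ℕ) (hk : 1 ≤ k) (hs : 1 ≤ s)
    (P : Fin s → MvPolynomial (Fin k) ℝ) (hP : ∀ i, (P i).totalDegree ≤ 1) :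
    (∀ σ : Fin s → SignType, Finite (ConnectedComponents ↥(SignRealization P σ))) ∧
    (∑ σ : Fin s → SignType, Nat.card (ConnectedComponents ↥(SignRealization P σ)))
      ≤ ∑ i ∈ Finset.range (k + 1), ∑ j ∈ Finset.range (k - i + 1),
          s.choose i * (s - i).choose j :=
  stmt5_general k s P hP
end

section
/- For all integers k ≥ 1 and s ≥ 1 there exist polynomials P₁,…,P_s ∈ ℝ[X₁,…,X_k], each of total degree at most 1, such that the number of realizable sign conditions of the family P₁,…,P_s equals Σ_{i=0}^{k} Σ_{j=0}^{k−i} C(s, i)·C(s−i, j), where C(n, m) denotes the binomial coefficient. -/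
open Polynomial Finset

section SignPattern

variable {ι : Type*} [LinearOrder ι]

lemma card_filter_le_of_mem {S : Finset ι} {y : ι} (hy : y ∈ S) :
    #{n ∈ S | y ≤ n} = #{n ∈ S | y < n} + 1 := by
  rw [← card_insert_of_notMem (a := y) (s := {n ∈ S | y < n}) (by simp)]
  congr 1
  ext n
  simp only [mem_filter, mem_insert, le_iff_eq_or_lt]
  constructor
  · rintro ⟨hn, rfl | h⟩
    exacts [Or.inl rfl, Or.inr ⟨hn, h⟩]
  · rintro (rfl | ⟨hn, h⟩)
    exacts [⟨hy, Or.inl rfl⟩, ⟨hn, Or.inr h⟩]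

lemma filter_le_eq_filter_lt_of_notMem {S : Finset ι} {y : ι} (hy : y ∉ S) :
    {n ∈ S | y ≤ n} = {n ∈ S | y < n} := by
  ext n
  simp only [mem_filter, le_iff_eq_or_lt]
  constructor
  · rintro ⟨hn, rfl | h⟩
    exacts [absurd hn hy, ⟨hn, h⟩]
  · rintro ⟨hn, h⟩
    exact ⟨hn, Or.inr h⟩

lemma SignType.neg_one_pow_succ_ne (m : ℕ) : (-1 : SignType) ^ (m + 1) ≠ (-1) ^ m := by
  rcases neg_one_pow_eq_or SignType m with h | h <;> simp [pow_succ, h]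

/-- Compare at the largest element of `S ∆ S'`, where the two counts differ by one. -/
lemma eq_of_neg_one_pow_card_filter_le {S S' : Finset ι}
    (h : ∀ i ∈ S ∪ S', (-1 : SignType) ^ #{n ∈ S | i ≤ n} = (-1) ^ #{n ∈ S' | i ≤ n}) :
    S = S' := by
  by_contra hne
  have hS : (symmDiff S S').Nonempty := symmDiff_nonempty.2 hne
  set y := (symmDiff S S').max' hS
  have hy : y ∈ symmDiff S S' := max'_mem _ hS
  have habove : {n ∈ S | y < n} = {n ∈ S' | y < n} := by
    ext n
    simp only [mem_filter]
    refine ⟨fun ⟨hn, hyn⟩ => ⟨?_, hyn⟩, fun ⟨hn, hyn⟩ => ⟨?_, hyn⟩⟩ <;> by_contra hn' <;>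
      exact hyn.not_ge (le_max' _ n (by simp [mem_symmDiff, hn, hn']))
  rcases mem_symmDiff.1 hy with ⟨hyS, hyS'⟩ | ⟨hyS', hyS⟩
  · have := h y (mem_union_left _ hyS)
    rw [card_filter_le_of_mem hyS, filter_le_eq_filter_lt_of_notMem hyS', habove] at this
    exact SignType.neg_one_pow_succ_ne _ this
  · have := h y (mem_union_right _ hyS')
    rw [card_filter_le_of_mem hyS', filter_le_eq_filter_lt_of_notMem hyS, habove] at this
    exact SignType.neg_one_pow_succ_ne _ this.symm

/-- The signs of `∏ a ∈ A, (X - u a) * ∏ n ∈ S, (X - c n)` at the points `u i`, when `u` is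
increasing and each `c n` lies just right of `u n`. -/
def signPattern (A S : Finset ι) (i : ι) : SignType :=
  if i ∈ A then 0 else (-1) ^ (#{a ∈ A | i < a} + #{n ∈ S | i ≤ n})

lemma signPattern_eq_zero_iff {A S : Finset ι} {i : ι} : signPattern A S i = 0 ↔ i ∈ A := by
  by_cases hi : i ∈ A
  · simp [signPattern, hi]
  · simp only [signPattern, hi, if_false, iff_false]
    exact pow_ne_zero _ (by decide)

lemma signPattern_inj {p p' : (_ : Finset ι) × Finset ι} (h : Disjoint p.1 p.2)
    (h' : Disjoint p'.1 p'.2) (heq : signPattern p.1 p.2 = signPattern p'.1 p'.2) : p = p' := by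
  obtain ⟨A, S⟩ := p
  obtain ⟨A', S'⟩ := p'
  obtain rfl : A = A' := by
    ext i
    rw [← signPattern_eq_zero_iff (S := S), heq, signPattern_eq_zero_iff]
  obtain rfl : S = S' := eq_of_neg_one_pow_card_filter_le fun i hi => by
    have hiA : i ∉ A := by
      rcases mem_union.1 hi with hi | hi
      exacts [disjoint_right.1 h hi, disjoint_right.1 h' hi]
    have := congrFun heq i
    simp only [signPattern, hiA, if_false, pow_add] at this
    exact (isUnit_neg_one.pow _).mul_left_cancel this
  rfl

/-- `signPattern` is injective on the `3 ^ card ι` disjoint pairs, as many as sign vectors. -/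
theorem signPattern_surjective [Fintype ι] (σ : ι → SignType) :
    ∃ A S : Finset ι, Disjoint A S ∧ signPattern A S = σ := by
  let D : Finset ((_ : Finset ι) × Finset ι) := univ.sigma fun A => Aᶜ.powerset
  have hD : ∀ p ∈ D, Disjoint p.1 p.2 := fun p hp =>
    subset_compl_iff_disjoint_left.1 (mem_powerset.1 (mem_sigma.1 hp).2)
  have hcard : #(univ : Finset (ι → SignType)) ≤ #D := by
    have := sum_pow_mul_eq_add_pow (1 : ℕ) 2 (univ : Finset ι)
    simp only [one_pow, one_mul, powerset_univ, card_univ] at this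
    simp only [D, card_univ, card_sigma, Fintype.card_fun, card_powerset, card_compl, this]
    rfl
  obtain ⟨p, hp, hpσ⟩ := surj_on_of_inj_on_of_card_le (fun p _ => signPattern p.1 p.2)
    (fun _ _ => mem_univ _) (fun p p' hp hp' => signPattern_inj (hD p hp) (hD p' hp')) hcard σ
    (mem_univ σ)
  exact ⟨p.1, p.2, hD p hp, hpσ.symm⟩

end SignPattern

section Polynomials

lemma sign_eval_prod_X_sub_C {α : Type*} (s : Finset α) (f : α → ℝ) {x : ℝ}
    (hx : ∀ a ∈ s, f a ≠ x) :
    SignType.sign ((∏ a ∈ s, (X - C (f a))).eval x) = (-1) ^ #{a ∈ s | x < f a} := by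
  have hfactor : ∀ a ∈ s, SignType.sign (x - f a) = if x < f a then -1 else 1 := by
    intro a ha
    split_ifs with h
    · exact sign_neg (sub_neg.2 h)
    · exact sign_pos (sub_pos.2 (lt_of_le_of_ne (not_lt.1 h) (hx a ha)))
  rw [eval_prod, ← signHom_apply, map_prod]
  simp only [signHom_apply, eval_sub, eval_X, eval_C]
  rw [prod_congr rfl hfactor, prod_ite, prod_const, prod_const_one, mul_one]

lemma exists_isRoot_mem_Ioo_of_eval_mul_neg {p : ℝ[X]} {a b : ℝ} (hab : a ≤ b)
    (h : p.eval a * p.eval b < 0) : ∃ ρ ∈ Set.Ioo a b, p.IsRoot ρ := by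
  rcases mul_neg_iff.1 h with ⟨ha, hb⟩ | ⟨ha, hb⟩
  · exact intermediate_value_Ioo' hab p.continuous.continuousOn ⟨hb, ha⟩
  · exact intermediate_value_Ioo hab p.continuous.continuousOn ⟨ha, hb⟩

lemma Polynomial.Monic.eventually_eval_pos {p : ℝ[X]} (hp : p.Monic) :
    ∀ᶠ x in Filter.atTop, 0 < p.eval x := by
  by_cases h1 : p = 1
  · simp [h1]
  · have hdeg : 0 < p.degree := natDegree_pos_iff_degree_pos.1 (hp.natDegree_pos.2 h1)
    exact (p.tendsto_atTop_of_leadingCoeff_nonneg hdeg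
      (by simp [hp.leadingCoeff])).eventually_gt_atTop 0

end Polynomials

section MonicSignConditions

variable {ι : Type*}

def IsMonicSignCondition (k : ℕ) (u : ι → ℝ) (σ : ι → SignType) : Prop :=
  ∃ q : ℝ[X], q.Monic ∧ q.natDegree = k ∧ ∀ i, SignType.sign (q.eval (u i)) = σ i

variable [LinearOrder ι] {u : ι → ℝ}

/-- Each `y ∈ S` forces a root between `u y` and the next point of `T` (or `+∞`). -/
theorem card_le_natDegree_of_sign_eval (hu : StrictMono u) {T S : Finset ι} (hST : S ⊆ T)
    {r : ℝ[X]} (hr : r.Monic)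
    (hsign : ∀ i ∈ T, SignType.sign (r.eval (u i)) = (-1) ^ #{n ∈ S | i ≤ n}) :
    #S ≤ r.natDegree := by
  have key : ∀ y ∈ S, ∃ ρ, r.IsRoot ρ ∧ u y < ρ ∧ ∀ j ∈ T, y < j → ρ < u j := by
    intro y hy
    obtain ⟨b, hyb, hbT, hb⟩ : ∃ b, u y < b ∧ (∀ j ∈ T, y < j → b ≤ u j) ∧
        SignType.sign (r.eval b) = (-1) ^ #{n ∈ S | y < n} := by
      by_cases hT : {j ∈ T | y < j}.Nonempty
      · have hz := mem_filter.1 (min'_mem _ hT)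
        refine ⟨u (min' _ hT), hu hz.2,
          fun j hj hyj => hu.monotone (min'_le _ _ (mem_filter.2 ⟨hj, hyj⟩)), ?_⟩
        rw [hsign _ hz.1]
        congr 2
        ext n
        simp only [mem_filter, and_congr_right_iff]
        exact fun hn => ⟨hz.2.trans_le, fun hyn => min'_le _ _ (mem_filter.2 ⟨hST hn, hyn⟩)⟩
      · have hempty : {n ∈ S | y < n} = ∅ :=
          filter_eq_empty_iff.2 fun n hn hyn => hT ⟨n, mem_filter.2 ⟨hST hn, hyn⟩⟩
        obtain ⟨b, hb, hyb⟩ :=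
          (hr.eventually_eval_pos.and (Filter.eventually_gt_atTop (u y))).exists
        exact ⟨b, hyb, fun j hj hyj => absurd ⟨j, mem_filter.2 ⟨hj, hyj⟩⟩ hT,
          by rw [hempty, card_empty, pow_zero, sign_pos hb]⟩
    have hneg : r.eval (u y) * r.eval b < 0 := by
      rw [← sign_eq_neg_one_iff, sign_mul, hsign y (hST hy), hb, card_filter_le_of_mem hy,
        pow_succ, mul_right_comm, ← pow_add, ← two_mul, pow_mul]
      simp
    obtain ⟨ρ, hρ, hroot⟩ := exists_isRoot_mem_Ioo_of_eval_mul_neg hyb.le hneg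
    exact ⟨ρ, hroot, hρ.1, fun j hj hyj => hρ.2.trans_le (hbT j hj hyj)⟩
  choose! ρ hroot hlt hgt using key
  have hinj : Set.InjOn ρ S := by
    intro y hy y' hy' h
    by_contra hne
    rcases lt_or_gt_of_ne hne with h' | h'
    · exact (hgt y hy y' (hST hy') h').not_gt (h ▸ hlt y' hy')
    · exact (hgt y' hy' y (hST hy) h').not_gt (h ▸ hlt y hy)
  calc #S ≤ #r.roots.toFinset := card_le_card_of_injOn ρ
        (fun y hy => Multiset.mem_toFinset.2 ((mem_roots hr.ne_zero).2 (hroot y hy))) hinj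
    _ ≤ Multiset.card r.roots := r.roots.toFinset_card_le
    _ ≤ r.natDegree := r.card_roots'

theorem card_add_card_le_of_isMonicSignCondition [Fintype ι] (hu : StrictMono u)
    {A S : Finset ι} (hAS : Disjoint A S) {k : ℕ}
    (h : IsMonicSignCondition k u (signPattern A S)) : #A + #S ≤ k := by
  obtain ⟨q, hq, rfl, hqσ⟩ := h
  have hpA : (∏ a ∈ A, (X - C (u a))).Monic :=
    monic_prod_of_monic _ _ fun a _ => monic_X_sub_C _
  obtain ⟨r, rfl⟩ : ∏ a ∈ A, (X - C (u a)) ∣ q := by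
    refine prod_dvd_of_coprime (fun a _ b _ hab => pairwise_coprime_X_sub_C hu.injective hab)
      fun a ha => dvd_iff_isRoot.2 ?_
    rw [IsRoot, ← sign_eq_zero_iff, hqσ, signPattern_eq_zero_iff]
    exact ha
  have hr : r.Monic := hpA.of_mul_monic_left hq
  rw [hpA.natDegree_mul hr, natDegree_prod_of_monic _ _ fun a _ => monic_X_sub_C _]
  simp only [natDegree_X_sub_C, sum_const, smul_eq_mul, mul_one, add_le_add_iff_left]
  refine card_le_natDegree_of_sign_eval hu (subset_compl_iff_disjoint_left.2 hAS) hr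
    fun i hi => ?_
  have hiA : i ∉ A := mem_compl.1 hi
  have := hqσ i
  rw [eval_mul, sign_mul,
    sign_eval_prod_X_sub_C A u fun a ha => hu.injective.ne (ne_of_mem_of_not_mem ha hiA),
    signPattern, if_neg hiA, pow_add] at this
  simp only [hu.lt_iff_lt] at this
  exact (isUnit_neg_one.pow _).mul_left_cancel this

lemma StrictMono.exists_between_next [Finite ι] (hu : StrictMono u) (n : ι) :
    ∃ c, u n < c ∧ ∀ j, n < j → c < u j := by
  have hnext : ∀ᶠ c in nhdsWithin (u n) (Set.Ioi (u n)), ∀ j, n < j → c < u j :=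
    Filter.eventually_all.2 fun j => by
      by_cases hj : n < j
      · exact ((eventually_lt_nhds (hu hj)).filter_mono nhdsWithin_le_nhds).mono fun _ h _ => h
      · exact Filter.Eventually.of_forall fun _ h => absurd h hj
  exact (eventually_mem_nhdsWithin.and hnext).exists

theorem isMonicSignCondition_signPattern [Finite ι] (hu : StrictMono u) {A S : Finset ι} {k : ℕ}
    (h : #A + #S ≤ k) : IsMonicSignCondition k u (signPattern A S) := by
  choose c hc using hu.exists_between_next
  have hci : ∀ n i, u i < c n ↔ i ≤ n := fun n i =>
    ⟨fun h => not_lt.1 fun hni => (hc n).2 i hni |>.not_gt h,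
      fun hin => (hu.monotone hin).trans_lt (hc n).1⟩
  obtain ⟨b, hb⟩ := (Set.finite_range u).bddBelow
  have hmonic : ∀ (s : Finset ι) (f : ι → ℝ), (∏ n ∈ s, (X - C (f n))).Monic :=
    fun s f => monic_prod_of_monic _ _ fun n _ => monic_X_sub_C _
  refine ⟨(∏ a ∈ A, (X - C (u a))) * (∏ n ∈ S, (X - C (c n))) * (X - C (b - 1)) ^ (k - #A - #S),
    ((hmonic A u).mul (hmonic S c)).mul ((monic_X_sub_C _).pow _), ?_, fun i => ?_⟩
  · rw [((hmonic A u).mul (hmonic S c)).natDegree_mul ((monic_X_sub_C _).pow _),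
      (hmonic A u).natDegree_mul (hmonic S c), natDegree_pow, natDegree_X_sub_C,
      natDegree_prod_of_monic _ _ fun n _ => monic_X_sub_C _,
      natDegree_prod_of_monic _ _ fun n _ => monic_X_sub_C _]
    simp only [natDegree_X_sub_C, sum_const, smul_eq_mul, mul_one]
    omega
  simp only [eval_mul, eval_pow, sign_mul, sign_pow]
  by_cases hi : i ∈ A
  · rw [signPattern, if_pos hi, eval_prod, prod_eq_zero hi (by simp)]
    simp
  · have hB : 0 < (X - C (b - 1)).eval (u i) := by
      simp only [eval_sub, eval_X, eval_C]
      linarith [hb ⟨i, rfl⟩]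
    rw [sign_eval_prod_X_sub_C A u fun a ha => hu.injective.ne (ne_of_mem_of_not_mem ha hi),
      sign_eval_prod_X_sub_C S c fun n _ => (le_or_gt i n).elim (fun h => ((hci n i).2 h).ne')
        fun h => ((hc n).2 i h).ne, sign_pos hB, one_pow, mul_one, signPattern, if_neg hi, pow_add]
    simp only [hu.lt_iff_lt, hci]

end MonicSignConditions

section Counting

lemma sum_powerset_filter_card_le {α M : Type*} [AddCommMonoid M] (T : Finset α) (d : ℕ)
    (f : ℕ → M) :
    ∑ S ∈ T.powerset with #S ≤ d, f #S = ∑ j ∈ range (d + 1), (#T).choose j • f j := by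
  rw [← sum_fiberwise_of_maps_to (g := card) (t := range (d + 1))
    fun S hS => mem_range.2 (Nat.lt_succ_of_le (mem_filter.1 hS).2)]
  refine sum_congr rfl fun j hj => ?_
  have : {S ∈ {S ∈ T.powerset | #S ≤ d} | #S = j} = T.powersetCard j := by
    rw [powersetCard_eq_filter, filter_filter]
    exact filter_congr fun S _ => ⟨And.right, fun h => ⟨h ▸ Nat.le_of_lt_succ (mem_range.1 hj), h⟩⟩
  rw [this, sum_congr rfl fun S hS => congrArg f (mem_powersetCard.1 hS).2, sum_const,
    card_powersetCard]

variable {ι : Type*} [LinearOrder ι] [Fintype ι]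

theorem card_isMonicSignCondition {u : ι → ℝ} (hu : StrictMono u) (k : ℕ) :
    Nat.card {σ : ι → SignType // IsMonicSignCondition k u σ} =
      ∑ i ∈ range (k + 1), ∑ j ∈ range (k - i + 1),
        (Fintype.card ι).choose i * (Fintype.card ι - i).choose j := by
  classical
  let D : Finset ((_ : Finset ι) × Finset ι) :=
    {A ∈ (univ : Finset ι).powerset | #A ≤ k}.sigma fun A => {S ∈ Aᶜ.powerset | #S ≤ k - #A}
  have hD : ∀ p ∈ D, Disjoint p.1 p.2 := fun p hp =>
    subset_compl_iff_disjoint_left.1 (mem_powerset.1 (mem_filter.1 (mem_sigma.1 hp).2).1)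
  have hmem : ∀ A S, Disjoint A S → (⟨A, S⟩ ∈ D ↔ #A + #S ≤ k) := fun A S hAS => by
    simp only [D, mem_sigma, mem_filter, mem_powerset, subset_univ, true_and,
      subset_compl_iff_disjoint_left.2 hAS]
    omega
  have hcount : #D = #{σ | IsMonicSignCondition k u σ} := by
    refine card_bij (fun p _ => signPattern p.1 p.2) (fun p hp => ?_)
      (fun p hp p' hp' => signPattern_inj (hD p hp) (hD p' hp')) fun σ hσ => ?_
    · exact mem_filter.2 ⟨mem_univ _,
        isMonicSignCondition_signPattern hu ((hmem p.1 p.2 (hD p hp)).1 hp)⟩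
    · obtain ⟨A, S, hAS, rfl⟩ := signPattern_surjective σ
      exact ⟨⟨A, S⟩, (hmem A S hAS).2
        (card_add_card_le_of_isMonicSignCondition hu hAS (mem_filter.1 hσ).2), rfl⟩
  have hinner (A : Finset ι) : #{S ∈ Aᶜ.powerset | #S ≤ k - #A} =
      ∑ j ∈ range (k - #A + 1), (Fintype.card ι - #A).choose j := by
    simpa [card_compl] using sum_powerset_filter_card_le Aᶜ (k - #A) fun _ => (1 : ℕ)
  rw [Nat.card_eq_fintype_card, Fintype.card_subtype, ← hcount, card_sigma,
    sum_congr rfl fun A _ => hinner A, sum_powerset_filter_card_le univ k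
      fun i => ∑ j ∈ range (k - i + 1), (Fintype.card ι - i).choose j, card_univ]
  simp only [smul_eq_mul, mul_sum]

end Counting

noncomputable def momentFamily (k s : ℕ) (i : Fin s) : MvPolynomial (Fin k) ℝ :=
  MvPolynomial.C ((i : ℝ) ^ k) + ∑ j : Fin k, MvPolynomial.C ((i : ℝ) ^ (j : ℕ)) * MvPolynomial.X j

lemma totalDegree_momentFamily_le (k s : ℕ) (i : Fin s) :
    (momentFamily k s i).totalDegree ≤ 1 := by
  refine (MvPolynomial.totalDegree_add _ _).trans (max_le ?_ ?_)
  · rw [MvPolynomial.totalDegree_C]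
    exact zero_le_one
  · refine (MvPolynomial.totalDegree_finsetSum _ _).trans (Finset.sup_le fun j _ => ?_)
    refine (MvPolynomial.totalDegree_mul _ _).trans ?_
    rw [MvPolynomial.totalDegree_C, MvPolynomial.totalDegree_X]

lemma eval_momentFamily {k s : ℕ} (x : Fin k → ℝ) (i : Fin s) :
    MvPolynomial.eval x (momentFamily k s i) =
      (X ^ k + ∑ j : Fin k, C (x j) * X ^ (j : ℕ)).eval (i : ℝ) := by
  simp only [momentFamily, map_add, map_sum, map_mul, MvPolynomial.eval_C, MvPolynomial.eval_X,
    eval_add, eval_pow, eval_X, eval_finsetSum, eval_mul, eval_C, mul_comm]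

lemma nonempty_signRealization_momentFamily_iff {k s : ℕ} (σ : Fin s → SignType) :
    (SignRealization (momentFamily k s) σ).Nonempty ↔
      IsMonicSignCondition k (fun i : Fin s => (i : ℝ)) σ := by
  constructor
  · rintro ⟨x, hx⟩
    have hlow := degree_sum_fin_lt x
    refine ⟨_, monic_X_pow_add hlow, ?_, fun i => (eval_momentFamily x i).symm ▸ hx i⟩
    rw [natDegree_add_eq_left_of_degree_lt (by rwa [degree_X_pow]), natDegree_X_pow]
  · rintro ⟨q, hq, rfl, hqσ⟩
    refine ⟨fun j => q.coeff j, fun i => ?_⟩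
    rw [eval_momentFamily, Fin.sum_univ_eq_sum_range (fun j => C (q.coeff j) * X ^ j),
      ← hq.as_sum]
    exact hqσ i

theorem stmt6_general (k s : ℕ) :
    ∃ P : Fin s → MvPolynomial (Fin k) ℝ,
      (∀ i, (P i).totalDegree ≤ 1) ∧
      Nat.card {σ : Fin s → SignType // (SignRealization P σ).Nonempty}
        = ∑ i ∈ Finset.range (k + 1), ∑ j ∈ Finset.range (k - i + 1),
            s.choose i * (s - i).choose j := by
  refine ⟨momentFamily k s, totalDegree_momentFamily_le k s, ?_⟩
  rw [Nat.card_congr (Equiv.subtypeEquivRight nonempty_signRealization_momentFamily_iff),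
    card_isMonicSignCondition (u := fun i : Fin s => (i : ℝ))
      (Nat.strictMono_cast.comp Fin.val_strictMono) k, Fintype.card_fin]

/-- For all `k ≥ 1` and `s ≥ 1` there exist `s` polynomials in `ℝ[X₁,…,X_k]`, each of
total degree at most `1`, such that the number of realizable sign conditions equals
`Σ_{i=0}^{k} Σ_{j=0}^{k−i} C(s,i)·C(s−i,j)`. -/
theorem stmt6 (k s : ℕ) (hk : 1 ≤ k) (hs : 1 ≤ s) :
    ∃ P : Fin s → MvPolynomial (Fin k) ℝ,
      (∀ i, (P i).totalDegree ≤ 1) ∧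
      Nat.card {σ : Fin s → SignType // (SignRealization P σ).Nonempty}
        = ∑ i ∈ Finset.range (k + 1), ∑ j ∈ Finset.range (k - i + 1),
            s.choose i * (s - i).choose j :=
  stmt6_general k s
end
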